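/- Let X be a random variable with finite range, let L_1,…,L_n be {0,1}-valued random variables, and let T_1,…,T_m be random variables with finite ranges, all on a common probability space. Let j:{1,…,m}→{1,…,n} assign a speaker to each round, and assume for each round k: conditioned on the previous messages (T_1,…,T_{k−1}) = t^{k−1} and on L_{j(k)}=0, the message T_k is independent of X (i.e. Pr(T_k=a | X=x, T^{k−1}=t^{k−1}, L_{j(k)}=0) = Pr(T_k=a | T^{k−1}=t^{k−1}, L_{j(k)}=0) whenever the conditioning events have positive probability). Assume also Pr(L_i=0 | X=x, T=t) > 0 for every i and every (x,t) with Pr(X=x, T=t) > 0, where T=(T_1,…,T_m). Then I(X;T) ≤ Σ_{i=1}^n ( susp_i(X,T) − susp_i(X) ), where susp_i denotes suspicion computed with respect to L_i. -/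

import Mathlib

open Finset

/-- Probability of an event `E` under the probability mass function `p`
on a finite sample space `Ω`. -/
noncomputable def Pr {Ω : Type*} [Fintype Ω] (p : Ω → ℝ) (E : Set Ω) : ℝ :=
  ∑ ω, E.indicator p ω

/-- Conditional probability `Pr(E | F)`. -/
noncomputable def cPr {Ω : Type*} [Fintype Ω] (p : Ω → ℝ) (E F : Set Ω) : ℝ :=
  Pr p (E ∩ F) / Pr p F

/-- The suspicion given a random variable `Yv`:
`susp(Y) = Σ_y Pr(Y=y) · (−log₂ Pr(L=0 | Y=y))`. -/
noncomputable def susp {Ω Y : Type*} [Fintype Ω] [Fintype Y] (p : Ω → ℝ)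
    (L : Ω → Bool) (Yv : Ω → Y) : ℝ :=
  ∑ y, Pr p {ω | Yv ω = y} * (-Real.logb 2 (cPr p {ω | L ω = false} {ω | Yv ω = y}))

/-- Mutual information (base 2) between two finite-valued random variables. -/
noncomputable def mutInfo {Ω S T : Type*} [Fintype Ω] [Fintype S] [Fintype T]
    (p : Ω → ℝ) (Xv : Ω → S) (Av : Ω → T) : ℝ :=
  ∑ x, ∑ a, Pr p {ω | Xv ω = x ∧ Av ω = a} *
    Real.logb 2 (Pr p {ω | Xv ω = x ∧ Av ω = a} /
      (Pr p {ω | Xv ω = x} * Pr p {ω | Av ω = a}))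

/-- Conditional Shannon entropy (base 2) `H(A | X)`. -/
noncomputable def condEntropy {Ω S T : Type*} [Fintype Ω] [Fintype S] [Fintype T]
    (p : Ω → ℝ) (Av : Ω → T) (Xv : Ω → S) : ℝ :=
  ∑ x, ∑ a, Pr p {ω | Xv ω = x ∧ Av ω = a} *
    Real.logb 2 (Pr p {ω | Xv ω = x} / Pr p {ω | Xv ω = x ∧ Av ω = a})

/-- Conditional mutual information (base 2) `I(X; A | Z)`. -/
noncomputable def condMutInfo {Ω S T U : Type*} [Fintype Ω] [Fintype S] [Fintype T] [Fintype U]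
    (p : Ω → ℝ) (Xv : Ω → S) (Av : Ω → T) (Zv : Ω → U) : ℝ :=
  ∑ z, ∑ x, ∑ a, Pr p {ω | Xv ω = x ∧ Av ω = a ∧ Zv ω = z} *
    Real.logb 2 ((Pr p {ω | Xv ω = x ∧ Av ω = a ∧ Zv ω = z} * Pr p {ω | Zv ω = z}) /
      (Pr p {ω | Xv ω = x ∧ Zv ω = z} * Pr p {ω | Av ω = a ∧ Zv ω = z}))

/-!
Write `q_k = Pr(X = x | T^k)`, so that `I(X;T) = 𝔼[log q_m - log q_0]`. In round `k`, with
speaker `i = j(k)`, Bayes' rule gives `q_k = Pr(X = x | T^k, L_i = 0) · c_k / c^X_k`, where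
`c_k`, `c^X_k` are the probabilities of `L_i = 0` given `T^k` and given `(X, T^k)`. The first
factor does not change in round `k` by the independence hypothesis, so the increment of
`log q_k` is the increase of `i`'s suspicion given `(X, T^k)` minus the increase of `i`'s
suspicion given `T^k`. Suspicion never decreases when more is revealed (Gibbs' inequality),
so the second term may be dropped and the first bounded by the sum over all players; summing
over the rounds, these increases telescope.
-/

open Real

lemma setOf_prod_eq {Ω A B : Type*} (Y : Ω → A) (Z : Ω → B) (ω : Ω) :
    {ω' | (Y ω', Z ω') = (Y ω, Z ω)} = {ω' | Y ω' = Y ω} ∩ {ω' | Z ω' = Z ω} :=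
  Set.ext fun _ => Prod.ext_iff

section FiniteProbability

variable {Ω : Type*} [Fintype Ω] {p : Ω → ℝ}

lemma Pr_nonneg (hp : ∀ ω, 0 ≤ p ω) (E : Set Ω) : 0 ≤ Pr p E :=
  sum_nonneg fun ω _ => Set.indicator_nonneg (fun ω _ => hp ω) ω

lemma Pr_mono (hp : ∀ ω, 0 ≤ p ω) {E F : Set Ω} (h : E ⊆ F) : Pr p E ≤ Pr p F :=
  sum_le_sum fun ω _ => Set.indicator_le_indicator_of_subset h hp ω

lemma Pr_univ : Pr p Set.univ = ∑ ω, p ω := by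
  simp [Pr]

lemma Pr_pos_of_mem (hp : ∀ ω, 0 ≤ p ω) {E : Set Ω} {ω : Ω} (hE : ω ∈ E) (hω : 0 < p ω) :
    0 < Pr p E :=
  hω.trans_le <| (Set.indicator_of_mem hE p).symm.le.trans <|
    single_le_sum (fun ω' _ => Set.indicator_nonneg (fun ω _ => hp ω) ω') (mem_univ ω)

lemma sum_Pr_mul {A : Type*} [Fintype A] (p : Ω → ℝ) (Y : Ω → A) (f : A → ℝ) :
    ∑ a, Pr p {ω | Y ω = a} * f a = ∑ ω, p ω * f (Y ω) := by
  classical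
  simp only [Pr, Set.indicator_apply, Set.mem_ofPred_eq, sum_mul, ite_mul, zero_mul]
  rw [sum_comm]
  simp

lemma sum_sum_Pr_mul {A B : Type*} [Fintype A] [Fintype B] (p : Ω → ℝ) (Y : Ω → A)
    (Z : Ω → B) (f : A → B → ℝ) :
    ∑ a, ∑ b, Pr p {ω | Y ω = a ∧ Z ω = b} * f a b = ∑ ω, p ω * f (Y ω) (Z ω) := by
  rw [← Fintype.sum_prod_type' (fun a b => Pr p {ω | Y ω = a ∧ Z ω = b} * f a b)]
  simpa only [Prod.ext_iff] using sum_Pr_mul p (fun ω => (Y ω, Z ω)) fun y => f y.1 y.2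

lemma sum_mul_congr_of_pos {f g : Ω → ℝ} (h : ∀ ω, 0 < p ω → f ω = g ω)
    (hp : ∀ ω, 0 ≤ p ω) : ∑ ω, p ω * f ω = ∑ ω, p ω * g ω :=
  sum_congr rfl fun ω _ => by
    rcases (hp ω).eq_or_lt with h0 | hpos
    · simp [← h0]
    · rw [h ω hpos]

lemma logb_le_sub_one_div_log {x : ℝ} (hx : 0 < x) : logb 2 x ≤ (x - 1) / log 2 :=
  div_le_div_of_nonneg_right (log_le_sub_one_of_pos hx) (log_pos one_lt_two).le

lemma cPr_pos (hp : ∀ ω, 0 ≤ p ω) {E F : Set Ω} (h : 0 < Pr p (E ∩ F)) : 0 < cPr p E F :=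
  div_pos h (h.trans_le (Pr_mono hp Set.inter_subset_right))

lemma cPr_mul_cPr (hp : ∀ ω, 0 ≤ p ω) (E G F : Set Ω) :
    cPr p E F * cPr p G (E ∩ F) = cPr p (G ∩ E) F := by
  unfold cPr
  rw [Set.inter_assoc]
  rcases (Pr_nonneg hp (E ∩ F)).eq_or_lt with h | h
  · have : Pr p (G ∩ (E ∩ F)) = 0 :=
      le_antisymm (h ▸ Pr_mono hp Set.inter_subset_right) (Pr_nonneg hp _)
    simp [← h, this]
  · field_simp

lemma logb_cPr_eq (hp : ∀ ω, 0 ≤ p ω) {E G F : Set Ω} (h : 0 < Pr p (G ∩ (E ∩ F))) :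
    logb 2 (cPr p E F) =
      logb 2 (cPr p E (G ∩ F)) + logb 2 (cPr p G F) - logb 2 (cPr p G (E ∩ F)) := by
  have hsub {U : Set Ω} (hU : G ∩ (E ∩ F) ⊆ U) : 0 < Pr p U := h.trans_le (Pr_mono hp hU)
  have hEF := cPr_pos (E := E) (F := F) hp (hsub fun _ h => h.2)
  have hGEF := cPr_pos (E := G) (F := E ∩ F) hp h
  have hGF := cPr_pos (E := G) (F := F) hp (hsub fun _ h => ⟨h.1, h.2.2⟩)
  have hEGF := cPr_pos (E := E) (F := G ∩ F) hp (hsub fun _ h => ⟨h.2.1, h.1, h.2.2⟩)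
  have hbayes := (cPr_mul_cPr hp E G F).trans
    ((congrArg (cPr p · F) (Set.inter_comm G E)).trans (cPr_mul_cPr hp G E F).symm)
  have := congrArg (logb 2) hbayes
  rw [logb_mul hEF.ne' hGEF.ne', logb_mul hGF.ne' hEGF.ne'] at this
  linarith

lemma cPr_inter_eq_of_cPr_inter_eq (hp : ∀ ω, 0 ≤ p ω) {A B C : Set Ω}
    (h : 0 < Pr p (B ∩ (A ∩ C))) (hind : cPr p B (A ∩ C) = cPr p B C) :
    cPr p A (B ∩ C) = cPr p A C := by
  have hB : 0 < cPr p B C := cPr_pos hp (h.trans_le (Pr_mono hp fun _ h => ⟨h.1, h.2.2⟩))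
  have hbayes := (cPr_mul_cPr hp A B C).trans
    ((congrArg (cPr p · C) (Set.inter_comm B A)).trans (cPr_mul_cPr hp B A C).symm)
  rw [hind, mul_comm] at hbayes
  exact (mul_left_cancel₀ hB.ne' hbayes).symm

lemma sum_mul_cPr_mul {A : Type*} [Fintype A] (hp : ∀ ω, 0 ≤ p ω) (E : Set Ω) (Y : Ω → A)
    (g : A → ℝ) :
    ∑ ω, p ω * (cPr p E {ω' | Y ω' = Y ω} * g (Y ω)) = ∑ ω, E.indicator p ω * g (Y ω) := by
  rw [← sum_Pr_mul p Y fun a => cPr p E {ω' | Y ω' = a} * g a, ← sum_Pr_mul _ Y g]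
  refine sum_congr rfl fun a _ => ?_
  have hE : Pr (E.indicator p) {ω | Y ω = a} = Pr p (E ∩ {ω | Y ω = a}) := by
    simp only [Pr, Set.indicator_indicator, Set.inter_comm]
  rw [hE, cPr, ← mul_assoc]
  rcases (Pr_nonneg hp {ω | Y ω = a}).eq_or_lt with h | h
  · have : Pr p (E ∩ {ω | Y ω = a}) = 0 :=
      le_antisymm (h ▸ Pr_mono hp Set.inter_subset_right) (Pr_nonneg hp _)
    simp [← h, this]
  · rw [mul_div_cancel₀ _ h.ne']

end FiniteProbability

section Suspicion

variable {Ω A B C : Type*} [Fintype Ω] [Fintype A] [Fintype B] [Fintype C] {p : Ω → ℝ}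

lemma susp_eq_sum (p : Ω → ℝ) (L : Ω → Bool) (Y : Ω → A) :
    susp p L Y = ∑ ω, p ω * -logb 2 (cPr p {ω' | L ω' = false} {ω' | Y ω' = Y ω}) :=
  sum_Pr_mul p Y fun a => -logb 2 (cPr p {ω' | L ω' = false} {ω' | Y ω' = a})

lemma susp_congr (L : Ω → Bool) {Y : Ω → A} {Y' : Ω → B}
    (h : ∀ ω, {ω' | Y ω' = Y ω} = {ω' | Y' ω' = Y' ω}) : susp p L Y = susp p L Y' := by
  simp only [susp_eq_sum, h]

lemma condEntropy_eq_sum (p : Ω → ℝ) (X : Ω → A) (Y : Ω → B) :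
    condEntropy p X Y = ∑ ω, p ω * -logb 2 (cPr p {ω' | X ω' = X ω} {ω' | Y ω' = Y ω}) := by
  rw [condEntropy, sum_sum_Pr_mul]
  refine sum_congr rfl fun ω _ => ?_
  rw [cPr, ← logb_inv, inv_div, Set.inter_comm]
  rfl

lemma condEntropy_congr (X : Ω → A) {Y : Ω → B} {Y' : Ω → C}
    (h : ∀ ω, {ω' | Y ω' = Y ω} = {ω' | Y' ω' = Y' ω}) :
    condEntropy p X Y = condEntropy p X Y' := by
  simp only [condEntropy_eq_sum, h]

lemma mutInfo_eq_condEntropy_sub (hp : ∀ ω, 0 ≤ p ω) (hp1 : ∑ ω, p ω = 1) (X : Ω → A)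
    (Y : Ω → B) : mutInfo p X Y = condEntropy p X (fun _ => ()) - condEntropy p X Y := by
  rw [mutInfo, sum_sum_Pr_mul, condEntropy_eq_sum, condEntropy_eq_sum, ← sum_sub_distrib]
  refine sum_mul_congr_of_pos (fun ω hω => ?_) hp |>.trans (sum_congr rfl fun ω _ => mul_sub _ _ _)
  have hXY : 0 < Pr p ({ω' | X ω' = X ω} ∩ {ω' | Y ω' = Y ω}) := Pr_pos_of_mem hp ⟨rfl, rfl⟩ hω
  have hX : 0 < Pr p {ω' | X ω' = X ω} := Pr_pos_of_mem hp rfl hω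
  have hY : 0 < Pr p {ω' | Y ω' = Y ω} := Pr_pos_of_mem hp rfl hω
  simp only [cPr, Set.ofPred_true, Set.inter_univ, Pr_univ, hp1, div_one]
  rw [show {ω' | X ω' = X ω ∧ Y ω' = Y ω} = {ω' | X ω' = X ω} ∩ {ω' | Y ω' = Y ω} from rfl,
    logb_div hXY.ne' (mul_pos hX hY).ne', logb_mul hX.ne' hY.ne', logb_div hXY.ne' hY.ne']
  ring

/-- Gibbs' inequality, with `𝔼[c'/c] = 𝔼[1_{L=0}/c] = 𝔼[c/c] ≤ 1` for the conditional
probabilities `c`, `c'` of `L = false` given `Y` and given `(Y, Z)` (the tower property,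
applied twice). -/
theorem susp_le_susp_prod (hp : ∀ ω, 0 ≤ p ω) (L : Ω → Bool) (Y : Ω → A) (Z : Ω → B)
    (hL : ∀ ω, 0 < p ω →
      0 < Pr p ({ω' | L ω' = false} ∩ {ω' | (Y ω', Z ω') = (Y ω, Z ω)})) :
    susp p L Y ≤ susp p L (fun ω => (Y ω, Z ω)) := by
  set G := {ω' | L ω' = false}
  set c : Ω → ℝ := fun ω => cPr p G {ω' | Y ω' = Y ω}
  set c' : Ω → ℝ := fun ω => cPr p G {ω' | (Y ω', Z ω') = (Y ω, Z ω)}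
  have hratio : ∑ ω, p ω * (c' ω * (c ω)⁻¹) ≤ ∑ ω, p ω := calc
    ∑ ω, p ω * (c' ω * (c ω)⁻¹)
      = ∑ ω, G.indicator p ω * (c ω)⁻¹ :=
        sum_mul_cPr_mul hp G (fun ω => (Y ω, Z ω)) fun y => (cPr p G {ω' | Y ω' = y.1})⁻¹
    _ = ∑ ω, p ω * (c ω * (c ω)⁻¹) :=
        (sum_mul_cPr_mul hp G Y fun y => (cPr p G {ω' | Y ω' = y})⁻¹).symm
    _ ≤ ∑ ω, p ω := sum_le_sum fun ω _ => mul_le_of_le_one_right (hp ω) mul_inv_le_one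
  have hterm (ω : Ω) : p ω * -logb 2 (c ω) ≤
      p ω * -logb 2 (c' ω) + (p ω * (c' ω * (c ω)⁻¹) - p ω) / log 2 := by
    rcases (hp ω).eq_or_lt with h0 | hω
    · simp [← h0]
    have hc' : 0 < c' ω := cPr_pos hp (hL ω hω)
    have hc : 0 < c ω := cPr_pos hp <| (hL ω hω).trans_le <|
      Pr_mono hp fun _ h => ⟨h.1, (Prod.ext_iff.1 h.2).1⟩
    have hlog := mul_le_mul_of_nonneg_left
      (logb_le_sub_one_div_log (mul_pos hc' (inv_pos.2 hc))) (hp ω)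
    rw [logb_mul hc'.ne' (inv_pos.2 hc).ne', logb_inv, mul_div_assoc', mul_sub_one] at hlog
    linarith
  rw [susp_eq_sum, susp_eq_sum]
  calc ∑ ω, p ω * -logb 2 (c ω)
      ≤ ∑ ω, (p ω * -logb 2 (c' ω) + (p ω * (c' ω * (c ω)⁻¹) - p ω) / log 2) :=
        sum_le_sum fun ω _ => hterm ω
    _ = ∑ ω, p ω * -logb 2 (c' ω) +
          (∑ ω, p ω * (c' ω * (c ω)⁻¹) - ∑ ω, p ω) / log 2 := by
        rw [sum_add_distrib, ← sum_div, sum_sub_distrib]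
    _ ≤ ∑ ω, p ω * -logb 2 (c' ω) := by
        have : (∑ ω, p ω * (c' ω * (c ω)⁻¹) - ∑ ω, p ω) / log 2 ≤ 0 :=
          div_nonpos_of_nonpos_of_nonneg (by linarith) (log_pos one_lt_two).le
        linarith

theorem susp_le_susp_of_refines (hp : ∀ ω, 0 ≤ p ω) (L : Ω → Bool) {Y : Ω → A} {Y' : Ω → B}
    (hY : ∀ ω ω', Y' ω' = Y' ω → Y ω' = Y ω)
    (hL : ∀ ω, 0 < p ω → 0 < Pr p ({ω' | L ω' = false} ∩ {ω' | Y' ω' = Y' ω})) :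
    susp p L Y ≤ susp p L Y' := by
  have hfib : ∀ ω, {ω' | (Y ω', Y' ω') = (Y ω, Y' ω)} = {ω' | Y' ω' = Y' ω} := fun ω => by
    rw [setOf_prod_eq, Set.inter_eq_right]
    exact fun ω' => hY ω ω'
  exact (susp_le_susp_prod hp L Y Y' fun ω hω => hfib ω ▸ hL ω hω).trans_eq (susp_congr L hfib)

end Suspicion

section Transcript

variable {Ω M : Type*} {m : ℕ}

/-- The first `k` messages `T^k`, as a random variable of a type not depending on `k`:
later messages are masked by `none`. -/
def transcript (T : Fin m → Ω → M) (k : ℕ) (ω : Ω) : Fin m → Option M :=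
  fun q => if (q : ℕ) < k then some (T q ω) else none

lemma transcript_eq_iff (T : Fin m → Ω → M) (k : ℕ) (ω' ω : Ω) :
    transcript T k ω' = transcript T k ω ↔ ∀ q : Fin m, (q : ℕ) < k → T q ω' = T q ω := by
  simp only [transcript, funext_iff]
  refine forall_congr' fun q => ?_
  by_cases hq : (q : ℕ) < k <;> simp [hq]

lemma transcript_succ_eq_iff (T : Fin m → Ω → M) (k : Fin m) (ω' ω : Ω) :
    transcript T (k + 1) ω' = transcript T (k + 1) ω ↔
      transcript T k ω' = transcript T k ω ∧ T k ω' = T k ω := by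
  simp only [transcript_eq_iff, Nat.lt_succ_iff_lt_or_eq, or_imp, forall_and, Fin.val_inj,
    forall_eq]

lemma transcript_zero (T : Fin m → Ω → M) (ω : Ω) : transcript T 0 ω = fun _ => none := rfl

lemma transcript_length_eq_iff (T : Fin m → Ω → M) (ω' ω : Ω) :
    transcript T m ω' = transcript T m ω ↔ (fun k => T k ω') = fun k => T k ω := by
  rw [transcript_eq_iff, funext_iff]
  exact forall_congr' fun q => imp_iff_right q.isLt

end Transcript

def MessageIndep {Ω S M : Type*} [Fintype Ω] {n m : ℕ} (p : Ω → ℝ) (X : Ω → S)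
    (L : Fin n → Ω → Bool) (T : Fin m → Ω → M) (j : Fin m → Fin n) : Prop :=
  ∀ (k : Fin m) (x : S) (a : M) (t : Fin m → M),
    0 < Pr p {ω | X ω = x ∧ (∀ i, i < k → T i ω = t i) ∧ L (j k) ω = false} →
    cPr p {ω | T k ω = a} {ω | X ω = x ∧ (∀ i, i < k → T i ω = t i) ∧ L (j k) ω = false} =
      cPr p {ω | T k ω = a} {ω | (∀ i, i < k → T i ω = t i) ∧ L (j k) ω = false}

section Protocol

variable {Ω S M : Type*} [Fintype Ω] {n m : ℕ} {p : Ω → ℝ}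
  (X : Ω → S) (L : Fin n → Ω → Bool) (T : Fin m → Ω → M)

lemma cPr_transcript_succ (hp : ∀ ω, 0 ≤ p ω) (j : Fin m → Fin n)
    (hindep : MessageIndep p X L T j) (k : Fin m) {ω : Ω}
    (hL : 0 < Pr p ({ω' | L (j k) ω' = false} ∩ {ω' | X ω' = X ω ∧ ∀ k, T k ω' = T k ω})) :
    cPr p {ω' | X ω' = X ω}
        ({ω' | L (j k) ω' = false} ∩ {ω' | transcript T (k + 1) ω' = transcript T (k + 1) ω}) =
      cPr p {ω' | X ω' = X ω}
        ({ω' | L (j k) ω' = false} ∩ {ω' | transcript T k ω' = transcript T k ω}) := by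
  have hnext : {ω' | L (j k) ω' = false} ∩
      {ω' | transcript T (k + 1) ω' = transcript T (k + 1) ω} = {ω' | T k ω' = T k ω} ∩
        ({ω' | L (j k) ω' = false} ∩ {ω' | transcript T k ω' = transcript T k ω}) := by
    ext ω'
    simp only [Set.mem_inter_iff, Set.mem_ofPred_eq, transcript_succ_eq_iff]
    tauto
  have hprev : ∀ ω', transcript T k ω' = transcript T k ω ↔ ∀ q, q < k → T q ω' = T q ω :=
    fun ω' => by simp [transcript_eq_iff]
  have hC : {ω' | L (j k) ω' = false} ∩ {ω' | transcript T k ω' = transcript T k ω} =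
      {ω' | (∀ q, q < k → T q ω' = T q ω) ∧ L (j k) ω' = false} := by
    ext ω'
    simp only [Set.mem_inter_iff, Set.mem_ofPred_eq, hprev]
    tauto
  have hXC : {ω' | X ω' = X ω} ∩ {ω' | (∀ q, q < k → T q ω' = T q ω) ∧ L (j k) ω' = false} =
      {ω' | X ω' = X ω ∧ (∀ q, q < k → T q ω' = T q ω) ∧ L (j k) ω' = false} := rfl
  have hsub : {ω' | L (j k) ω' = false} ∩ {ω' | X ω' = X ω ∧ ∀ k, T k ω' = T k ω} ⊆
      {ω' | T k ω' = T k ω} ∩ ({ω' | X ω' = X ω} ∩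
        {ω' | (∀ q, q < k → T q ω' = T q ω) ∧ L (j k) ω' = false}) :=
    fun ω' ⟨hL, hX, hT⟩ => ⟨hT k, hX, fun q _ => hT q, hL⟩
  have hpos := hL.trans_le (Pr_mono hp hsub)
  rw [hnext, hC]
  refine cPr_inter_eq_of_cPr_inter_eq hp hpos ?_
  rw [hXC] at hpos ⊢
  exact hindep k (X ω) (T k ω) (fun q => T q ω) (hpos.trans_le (Pr_mono hp Set.inter_subset_right))

variable [Fintype M]

lemma susp_transcript_le_succ (hp : ∀ ω, 0 ≤ p ω) (i : Fin n) (k : Fin m)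
    (hL : ∀ ω, 0 < p ω →
      0 < Pr p ({ω' | L i ω' = false} ∩ {ω' | X ω' = X ω ∧ ∀ k, T k ω' = T k ω})) :
    susp p (L i) (transcript T k) ≤ susp p (L i) (transcript T (k + 1)) := by
  refine susp_le_susp_of_refines hp (L i) (fun ω ω' h => ?_) fun ω hω =>
    (hL ω hω).trans_le <| Pr_mono hp fun ω' ⟨hL, hX, hT⟩ => ⟨hL, ?_⟩
  · exact ((transcript_succ_eq_iff T k ω' ω).1 h).1
  · simp [hT, transcript_eq_iff]

variable [Fintype S]

lemma susp_prod_transcript_le_succ (hp : ∀ ω, 0 ≤ p ω) (i : Fin n) (k : Fin m)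
    (hL : ∀ ω, 0 < p ω →
      0 < Pr p ({ω' | L i ω' = false} ∩ {ω' | X ω' = X ω ∧ ∀ k, T k ω' = T k ω})) :
    susp p (L i) (fun ω => (X ω, transcript T k ω)) ≤
      susp p (L i) (fun ω => (X ω, transcript T (k + 1) ω)) := by
  refine susp_le_susp_of_refines hp (L i) (fun ω ω' h => ?_) fun ω hω =>
    (hL ω hω).trans_le <| Pr_mono hp fun ω' ⟨hL, hX, hT⟩ => ⟨hL, ?_⟩
  · simp_all [transcript_succ_eq_iff]
  · simp [hX, hT, transcript_eq_iff]

lemma mutInfo_eq_condEntropy_transcript (hp : ∀ ω, 0 ≤ p ω) (hp1 : ∑ ω, p ω = 1) :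
    mutInfo p X (fun ω k => T k ω) =
      condEntropy p X (transcript T 0) - condEntropy p X (transcript T m) := by
  rw [mutInfo_eq_condEntropy_sub hp hp1,
    condEntropy_congr X (Y := transcript T 0) (Y' := fun _ => ()) fun ω => ?_,
    condEntropy_congr X (Y := transcript T m) (Y' := fun ω k => T k ω) fun ω => ?_]
  all_goals ext ω'; simp [transcript_zero, transcript_length_eq_iff]

lemma condEntropy_transcript_sub_succ (hp : ∀ ω, 0 ≤ p ω) (j : Fin m → Fin n)
    (hindep : MessageIndep p X L T j) (k : Fin m)
    (hL : ∀ ω, 0 < p ω →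
      0 < Pr p ({ω' | L (j k) ω' = false} ∩ {ω' | X ω' = X ω ∧ ∀ k, T k ω' = T k ω})) :
    condEntropy p X (transcript T k) - condEntropy p X (transcript T (k + 1)) =
      (susp p (L (j k)) (fun ω => (X ω, transcript T (k + 1) ω)) -
          susp p (L (j k)) (fun ω => (X ω, transcript T k ω))) -
        (susp p (L (j k)) (transcript T (k + 1)) - susp p (L (j k)) (transcript T k)) := by
  simp only [condEntropy_eq_sum, susp_eq_sum, setOf_prod_eq, ← sum_sub_distrib, ← mul_sub]
  refine sum_mul_congr_of_pos (fun ω hω => ?_) hp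
  have hpos (k' : ℕ) : 0 < Pr p ({ω' | L (j k) ω' = false} ∩
      ({ω' | X ω' = X ω} ∩ {ω' | transcript T k' ω' = transcript T k' ω})) :=
    (hL ω hω).trans_le <| Pr_mono hp fun ω' ⟨hL, hX, hT⟩ =>
      ⟨hL, hX, by simp [hT, transcript_eq_iff]⟩
  rw [logb_cPr_eq hp (hpos k), logb_cPr_eq hp (hpos (k + 1)),
    cPr_transcript_succ X L T hp j hindep k (hL ω hω)]
  ring

end Protocol

/-- for a multi-round protocol with speaker assignment `j`,
`I(X;T) ≤ Σ_i (susp_i(X,T) − susp_i(X))`. -/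
theorem info_le_total_susp_increase {Ω S M : Type*} [Fintype Ω] [Fintype S] [Fintype M]
    {n m : ℕ}
    (p : Ω → ℝ) (hp : ∀ ω, 0 ≤ p ω) (hp1 : ∑ ω, p ω = 1)
    (X : Ω → S) (L : Fin n → Ω → Bool) (T : Fin m → Ω → M) (j : Fin m → Fin n)
    (hindep : ∀ (k : Fin m) (x : S) (a : M) (t : Fin m → M),
      0 < Pr p {ω | X ω = x ∧ (∀ i, i < k → T i ω = t i) ∧ L (j k) ω = false} →
      cPr p {ω | T k ω = a}
          {ω | X ω = x ∧ (∀ i, i < k → T i ω = t i) ∧ L (j k) ω = false} =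
        cPr p {ω | T k ω = a}
          {ω | (∀ i, i < k → T i ω = t i) ∧ L (j k) ω = false})
    (hpos : ∀ (i : Fin n) (x : S) (t : Fin m → M),
      0 < Pr p {ω | X ω = x ∧ ∀ k, T k ω = t k} →
      0 < cPr p {ω | L i ω = false} {ω | X ω = x ∧ ∀ k, T k ω = t k}) :
    mutInfo p X (fun ω k => T k ω) ≤
      ∑ i : Fin n,
        (susp p (L i) (fun ω => (X ω, fun k => T k ω)) - susp p (L i) X) := by
  have hL (i : Fin n) (ω : Ω) (hω : 0 < p ω) :
      0 < Pr p ({ω' | L i ω' = false} ∩ {ω' | X ω' = X ω ∧ ∀ k, T k ω' = T k ω}) := by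
    have hF := Pr_pos_of_mem hp (E := {ω' | X ω' = X ω ∧ ∀ k, T k ω' = T k ω})
      ⟨rfl, fun _ => rfl⟩ hω
    exact (div_pos_iff_of_pos_right hF).1 (hpos i (X ω) (fun k => T k ω) hF)
  set H : ℕ → ℝ := fun k => condEntropy p X (transcript T k)
  set a : Fin n → ℕ → ℝ := fun i k => susp p (L i) (fun ω => (X ω, transcript T k ω))
  set b : Fin n → ℕ → ℝ := fun i k => susp p (L i) (transcript T k)
  have ha (i : Fin n) : a i m - a i 0 =
      susp p (L i) (fun ω => (X ω, fun k => T k ω)) - susp p (L i) X := by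
    congr 1 <;> refine susp_congr (L i) fun ω => ?_ <;> ext ω' <;>
      simp [transcript_zero, transcript_length_eq_iff]
  calc mutInfo p X (fun ω k => T k ω)
      = ∑ k : Fin m, (H k - H (k + 1)) :=
        (mutInfo_eq_condEntropy_transcript X T hp hp1).trans
          ((Fin.sum_univ_eq_sum_range (fun k => H k - H (k + 1)) m).trans (sum_range_sub' H m)).symm
    _ = ∑ k : Fin m, ((a (j k) (k + 1) - a (j k) k) - (b (j k) (k + 1) - b (j k) k)) :=
        sum_congr rfl fun k _ => condEntropy_transcript_sub_succ X L T hp j hindep k (hL (j k))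
    _ ≤ ∑ k : Fin m, (a (j k) (k + 1) - a (j k) k) :=
        sum_le_sum fun k _ =>
          sub_le_self _ (sub_nonneg.2 (susp_transcript_le_succ X L T hp (j k) k (hL (j k))))
    _ ≤ ∑ k : Fin m, ∑ i, (a i (k + 1) - a i k) :=
        sum_le_sum fun k _ => single_le_sum
          (fun i _ => sub_nonneg.2 (susp_prod_transcript_le_succ X L T hp i k (hL i)))
          (mem_univ (j k))
    _ = ∑ i, (susp p (L i) (fun ω => (X ω, fun k => T k ω)) - susp p (L i) X) := by
        rw [sum_comm]
        refine sum_congr rfl fun i _ => ?_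
        rw [← ha, Fin.sum_univ_eq_sum_range (fun k => a i (k + 1) - a i k) m, sum_range_sub]
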